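/- arXiv:2008.11670 — 8 statements merged into one kernel-verified Lean document; each statement's English description precedes it below -/
import Mathlib

section
/- Let d ≥ 2 be an integer and let H = ∑_{i=0}^d (1-i)·e_i(x_1,…,x_d) be the polynomial in d real variables where e_i is the i-th elementary symmetric polynomial. Then: (a) for every i ∈ {1,…,d}, the second partial derivative ∂²H/∂x_i² is identically zero; and (b) for the point c = (1/(d-1),…,1/(d-1)) and any k pairwise distinct indices 1 ≤ i_1 < ⋯ < i_k ≤ d (1 ≤ k ≤ d), the iterated partial derivative satisfies -∂^k H/∂x_{i_1}⋯∂x_{i_k}(c) = k·(d/(d-1))^{d-k-1}. -/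
/-!
Write `e_n(s)` for the elementary symmetric polynomial in the variables indexed by a finset `s`.
Since `e_{n+1}(s) = e_{n+1}(s \ {j}) + X_j e_n(s \ {j})` for `j ∈ s`, we get
`∂_j e_{n+1}(s) = e_n(s \ {j})`, and `∂_j e_n(s) = 0` for `j ∉ s`. Hence `∂_i² H = 0`, and
differentiating `H` along `k` distinct indices leaves `∑_m (1 - k - m) e_m(s)`, where `s` is the
complement of those indices, `#s = d - k`. At the constant point `x` this is
`∑_m (1 - k - m) C(d-k, m) x^m`, which the binomial theorem and its derivative evaluate to
`((1 - k)(1 + x) - (d - k) x) (1 + x)^(d-k-1)`; for `x = 1/(d-1)` the first factor is `-k` and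
`1 + x = d/(d-1)`.
-/

open Finset

namespace MvPolynomial

variable {R σ : Type*} [CommSemiring R]

noncomputable def esymmIn (s : Finset σ) (n : ℕ) : MvPolynomial σ R :=
  ∑ t ∈ s.powersetCard n, ∏ i ∈ t, X i

@[simp]
theorem esymmIn_zero (s : Finset σ) : (esymmIn s 0 : MvPolynomial σ R) = 1 := by
  simp [esymmIn]

theorem esymm_eq_esymmIn_univ [Fintype σ] (n : ℕ) : esymm σ R n = esymmIn univ n := rfl

theorem esymmIn_insert_succ [DecidableEq σ] {j : σ} {s : Finset σ} (hj : j ∉ s) (n : ℕ) :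
    (esymmIn (insert j s) (n + 1) : MvPolynomial σ R) =
      esymmIn s (n + 1) + X j * esymmIn s n := by
  have hdisj : Disjoint (s.powersetCard (n + 1)) ((s.powersetCard n).image (insert j)) := by
    refine disjoint_left.mpr fun t ht ht' => hj ?_
    obtain ⟨u, -, rfl⟩ := mem_image.mp ht'
    exact (mem_powersetCard.mp ht).1 (mem_insert_self j u)
  have hinj : Set.InjOn (insert j) (s.powersetCard n : Set (Finset σ)) := fun u hu v hv huv => by
    have hju : j ∉ u := fun h => hj ((mem_powersetCard.mp hu).1 h)
    have hjv : j ∉ v := fun h => hj ((mem_powersetCard.mp hv).1 h)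
    rw [← erase_insert hju, ← erase_insert hjv, huv]
  rw [esymmIn, powersetCard_succ_insert hj, sum_union hdisj, sum_image hinj, esymmIn, esymmIn,
    mul_sum]
  refine congrArg _ (sum_congr rfl fun u hu => prod_insert fun h => hj ?_)
  exact (mem_powersetCard.mp hu).1 h

theorem pderiv_prod_X_of_notMem {j : σ} {s : Finset σ} (hj : j ∉ s) :
    pderiv j (∏ i ∈ s, X i : MvPolynomial σ R) = 0 := by
  classical
  induction s using Finset.induction_on with
  | empty => simp
  | insert a s ha ih =>
    rw [mem_insert, not_or] at hj
    simp [prod_insert ha, ih hj.2, pderiv_X_of_ne (Ne.symm hj.1)]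

theorem pderiv_esymmIn_of_notMem {j : σ} {s : Finset σ} (hj : j ∉ s) (n : ℕ) :
    pderiv j (esymmIn s n : MvPolynomial σ R) = 0 := by
  rw [esymmIn, map_sum]
  exact sum_eq_zero fun t ht => pderiv_prod_X_of_notMem fun h => hj ((mem_powersetCard.mp ht).1 h)

theorem pderiv_esymmIn_succ_of_mem [DecidableEq σ] {j : σ} {s : Finset σ} (hj : j ∈ s)
    (n : ℕ) :
    pderiv j (esymmIn s (n + 1) : MvPolynomial σ R) = esymmIn (s.erase j) n := by
  rw [← insert_erase hj, esymmIn_insert_succ (notMem_erase j s), erase_insert (notMem_erase j s)]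
  simp [pderiv_esymmIn_of_notMem (notMem_erase j s)]

theorem pderiv_pderiv_esymmIn_self [DecidableEq σ] (j : σ) (s : Finset σ) (n : ℕ) :
    pderiv j (pderiv j (esymmIn s n : MvPolynomial σ R)) = 0 := by
  cases n with
  | zero => simp
  | succ n =>
    by_cases hj : j ∈ s
    · rw [pderiv_esymmIn_succ_of_mem hj, pderiv_esymmIn_of_notMem (notMem_erase j s)]
    · rw [pderiv_esymmIn_of_notMem hj, map_zero]

theorem eval_const_esymmIn (s : Finset σ) (n : ℕ) (t : R) :
    eval (fun _ => t) (esymmIn s n) = s.card.choose n * t ^ n := by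
  rw [esymmIn, map_sum, sum_congr rfl fun u hu => ?_, sum_const, card_powersetCard, nsmul_eq_mul]
  simp [(mem_powersetCard.mp hu).2]

noncomputable def iteratedPDeriv (l : List σ) : MvPolynomial σ R →ₗ[R] MvPolynomial σ R :=
  l.foldr (fun i f => (pderiv i).toLinearMap ∘ₗ f) LinearMap.id

theorem iteratedPDeriv_apply (l : List σ) (p : MvPolynomial σ R) :
    iteratedPDeriv l p = l.foldr (fun i p => pderiv i p) p := by
  induction l with
  | nil => rfl
  | cons i l ih => simp [iteratedPDeriv, ← ih]

theorem iteratedPDeriv_cons (i : σ) (l : List σ) (p : MvPolynomial σ R) :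
    iteratedPDeriv (i :: l) p = pderiv i (iteratedPDeriv l p) := by
  simp [iteratedPDeriv_apply]

section

variable [DecidableEq σ] {l : List σ} {s : Finset σ}

theorem iteratedPDeriv_esymmIn_add_length (hl : l.Nodup) (hls : ∀ i ∈ l, i ∈ s) (n : ℕ) :
    iteratedPDeriv l (esymmIn s (n + l.length) : MvPolynomial σ R) =
      esymmIn (s \ l.toFinset) n := by
  induction l generalizing n with
  | nil => simp [iteratedPDeriv_apply]
  | cons j l ih =>
    obtain ⟨hjl, hl⟩ := List.nodup_cons.mp hl
    have hjs : j ∈ s \ l.toFinset :=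
      mem_sdiff.mpr ⟨hls j List.mem_cons_self, by simpa using hjl⟩
    rw [iteratedPDeriv_cons, List.length_cons, ← add_assoc, add_right_comm,
      ih hl (fun i hi => hls i (List.mem_cons_of_mem j hi)), pderiv_esymmIn_succ_of_mem hjs,
      List.toFinset_cons, sdiff_insert]

theorem iteratedPDeriv_esymmIn_of_lt (hl : l.Nodup) (hls : ∀ i ∈ l, i ∈ s) {n : ℕ}
    (hn : n < l.length) : iteratedPDeriv l (esymmIn s n : MvPolynomial σ R) = 0 := by
  induction l with
  | nil => simp at hn
  | cons j l ih =>
    obtain ⟨-, hl⟩ := List.nodup_cons.mp hl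
    have hls' : ∀ i ∈ l, i ∈ s := fun i hi => hls i (List.mem_cons_of_mem j hi)
    rw [iteratedPDeriv_cons]
    rcases (Nat.lt_succ_iff.mp hn).lt_or_eq with hn | rfl
    · rw [ih hl hls' hn, map_zero]
    · rw [← zero_add l.length, iteratedPDeriv_esymmIn_add_length hl hls', esymmIn_zero,
        pderiv_one]

end

theorem iteratedPDeriv_sum_C_mul_esymm [Fintype σ] [DecidableEq σ] {l : List σ} (hl : l.Nodup)
    (a : ℕ → R) {N : ℕ} (hN : l.length ≤ N) :
    iteratedPDeriv l (∑ n ∈ range N, C (a n) * esymm σ R n) =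
      ∑ m ∈ range (N - l.length), C (a (l.length + m)) * esymmIn (univ \ l.toFinset) m := by
  have hls : ∀ i ∈ l, i ∈ (univ : Finset σ) := fun i _ => mem_univ i
  simp_rw [map_sum, C_mul', map_smul, esymm_eq_esymmIn_univ]
  rw [← Nat.add_sub_of_le hN, sum_range_add, Nat.add_sub_cancel_left,
    sum_eq_zero fun n hn => by
      rw [iteratedPDeriv_esymmIn_of_lt hl hls (mem_range.mp hn), smul_zero], zero_add]
  simp_rw [add_comm l.length, iteratedPDeriv_esymmIn_add_length hl hls]

end MvPolynomial

open MvPolynomial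

theorem sum_range_natCast_mul_choose_mul_pow {R : Type*} [CommSemiring R] (n : ℕ) (x : R) :
    ∑ m ∈ range (n + 1), (m : R) * n.choose m * x ^ m = n * x * (1 + x) ^ (n - 1) := by
  cases n with
  | zero => simp
  | succ n =>
    have hterm : ∀ m ∈ range (n + 1),
        ((m + 1 : ℕ) : R) * (n + 1).choose (m + 1) * x ^ (m + 1) =
          (n + 1 : ℕ) * x * (x ^ m * 1 ^ (n - m) * n.choose m) := fun m _ => by
      rw [← Nat.cast_mul, mul_comm (m + 1), ← Nat.add_one_mul_choose_eq]
      push_cast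
      ring
    rw [sum_range_succ', sum_congr rfl hterm, ← mul_sum, ← add_pow, add_comm x]
    simp

theorem sum_range_sub_mul_choose_mul_pow {K : Type*} [Field K] (a : K) {x : K} (hx : 1 + x ≠ 0)
    (n : ℕ) : ∑ m ∈ range (n + 1), (a - m) * (n.choose m * x ^ m) =
      (a * (1 + x) - n * x) * (1 + x) ^ ((n : ℤ) - 1) := by
  have hsplit : ∀ m : ℕ, (a - m) * (n.choose m * x ^ m) =
      a * (x ^ m * 1 ^ (n - m) * n.choose m) - m * n.choose m * x ^ m := fun m => by ring
  simp_rw [hsplit, sum_sub_distrib, ← mul_sum, ← add_pow, sum_range_natCast_mul_choose_mul_pow,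
    zpow_sub_one₀ hx, zpow_natCast, add_comm x]
  cases n with
  | zero => field_simp; ring
  | succ n => field_simp; simp; ring

/-- **Partial derivatives of `H = ∑_{i=0}^d (1-i)·e_i`.**
(a) Every pure second partial derivative `∂²H/∂x_i²` vanishes identically.
(b) At the point `c = (1/(d-1),…,1/(d-1))`, for any `k ≥ 1` pairwise distinct indices
`i_1,…,i_k` (modeled by a nodup list `L` of length `k`), the iterated partial derivative
satisfies `-∂^k H/∂x_{i_1}⋯∂x_{i_k}(c) = k·(d/(d-1))^{d-k-1}`. -/
theorem partial_derivatives_of_H (d : ℕ) (hd : 2 ≤ d)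
    (H : MvPolynomial (Fin d) ℝ)
    (hH : H = ∑ i ∈ Finset.range (d + 1),
      MvPolynomial.C (1 - (i : ℝ)) * MvPolynomial.esymm (Fin d) ℝ i) :
    (∀ i : Fin d, MvPolynomial.pderiv i (MvPolynomial.pderiv i H) = 0) ∧
    (∀ (k : ℕ) (L : List (Fin d)), 1 ≤ k → L.length = k → L.Nodup →
      - MvPolynomial.eval (fun _ : Fin d => 1 / ((d : ℝ) - 1))
          (L.foldr (fun i p => MvPolynomial.pderiv i p) H)
        = (k : ℝ) * ((d : ℝ) / ((d : ℝ) - 1)) ^ ((d : ℤ) - (k : ℤ) - 1)) := by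
  subst hH
  refine ⟨fun i => ?_, fun k L hk hlen hnd => ?_⟩
  · simp_rw [map_sum, pderiv_C_mul, esymm_eq_esymmIn_univ,
      pderiv_pderiv_esymmIn_self, mul_zero, sum_const_zero]
  have hcardL : L.toFinset.card = k := by rw [List.toFinset_card_of_nodup hnd, hlen]
  have hkd : k ≤ d := by simpa [hcardL] using card_le_univ L.toFinset
  have hcard : (univ \ L.toFinset).card = d - k := by simp [card_sdiff, hcardL]
  have hd1 : (0 : ℝ) < d - 1 := by
    have : (2 : ℝ) ≤ d := by exact_mod_cast hd
    linarith
  rw [← iteratedPDeriv_apply, iteratedPDeriv_sum_C_mul_esymm hnd _ (by omega), map_sum]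
  simp_rw [map_mul, eval_C, eval_const_esymmIn, hcard, hlen,
    show d + 1 - k = d - k + 1 by omega, Nat.cast_add, ← sub_sub]
  have hx : 1 + 1 / ((d : ℝ) - 1) = d / (d - 1) := by field_simp; ring
  have hcoef : (1 - k) * ((d : ℝ) / (d - 1)) - (d - k) * (1 / (d - 1)) = -k := by
    field_simp; ring
  rw [sum_range_sub_mul_choose_mul_pow _ (hx ▸ (div_pos (by linarith) hd1).ne'), hx,
    Nat.cast_sub hkd, Nat.cast_sub hkd, hcoef, sub_right_comm]
  ring
end

section
/- For d ∈ ℕ let N(1^d) := d! · a_d, where a_d is the d-th coefficient of the formal power series exp(-2x)·(1-x)^{-2} ∈ ℚ[[x]] (so N(1^d) is the degree of the hyperdeterminant of format 2^{×d}). Then as d → ∞, the ratio of N(1^d) to √(2π) · d^{(2d+1)/2} · (d+3) / e^{d+2} tends to 1. -/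
open Filter Finset PowerSeries

/-!
Since `(1 - X)⁻² = ∑ (n + 1) Xⁿ`, the coefficient `a_d` of `exp(-2X) (1 - X)⁻²` is
`(d + 1) S_{d+1} + 2 S_d`, where `S_n` are the partial sums of the series of `e⁻²`.
Hence `a_d ~ d e⁻²`, and Stirling's formula `d! ~ √(2πd) (d/e)^d` gives
`N(1^d) ~ √(2πd) (d/e)^d · d e⁻²`, which is the stated normalization up to the factor
`(d + 3)/d → 1`.
-/

open Asymptotics Nat Real Topology

namespace PowerSeries

theorem inv_one_sub_X_pow_succ {K : Type*} [Field K] (d : ℕ) :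
    ((1 - X : K⟦X⟧) ^ (d + 1))⁻¹ = mk fun n => ((d + n).choose d : K) := by
  rw [eq_comm, eq_inv_iff_mul_eq_one (by simp)]
  exact mk_add_choose_mul_one_sub_pow_eq_one K d

theorem inv_one_sub_X_sq {K : Type*} [Field K] :
    ((1 - X : K⟦X⟧) ^ 2)⁻¹ = mk fun n => (n + 1 : K) := by
  rw [inv_one_sub_X_pow_succ 1]
  simp [add_comm]

theorem coeff_rescale_exp_mul_inv_one_sub_X_sq {K : Type*} [Field K] [Algebra ℚ K]
    (a : K) (d : ℕ) :
    coeff d (rescale a (exp K) * ((1 - X) ^ 2)⁻¹)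
      = ∑ k ∈ range (d + 1), a ^ k / k ! * ((d : K) + 1 - k) := by
  rw [inv_one_sub_X_sq, coeff_mul, Nat.sum_antidiagonal_eq_sum_range_succ_mk]
  refine sum_congr rfl fun k hk => ?_
  rw [coeff_rescale, coeff_exp, coeff_mk, Nat.cast_sub (mem_range_succ_iff.mp hk)]
  simp only [one_div, map_inv₀, map_natCast]
  ring

end PowerSeries

section ExpPartialSums

variable {K : Type*} [Field K] [CharZero K]

theorem sum_range_succ_mul_pow_div_factorial (x : K) (n : ℕ) :
    ∑ k ∈ range (n + 1), (k : K) * (x ^ k / k !) = x * ∑ k ∈ range n, x ^ k / k ! := by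
  rw [sum_range_succ', mul_sum]
  simp only [Nat.cast_zero, zero_mul, add_zero]
  refine sum_congr rfl fun k _ => ?_
  rw [factorial_succ, pow_succ]
  push_cast
  field_simp

theorem sum_range_succ_pow_div_factorial_mul (x : K) (d : ℕ) :
    ∑ k ∈ range (d + 1), x ^ k / k ! * ((d : K) + 1 - k)
      = (d + 1) * (∑ k ∈ range (d + 1), x ^ k / k !) - x * ∑ k ∈ range d, x ^ k / k ! := by
  rw [← sum_range_succ_mul_pow_div_factorial, mul_sum, ← sum_sub_distrib]
  exact sum_congr rfl fun k _ => by ring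

end ExpPartialSums

theorem Real.tendsto_sum_range_pow_div_factorial (x : ℝ) :
    Tendsto (fun n => ∑ k ∈ range n, x ^ k / k !) atTop (𝓝 (exp x)) := by
  rw [Real.exp_eq_exp_ℝ]
  exact (NormedSpace.expSeries_div_hasSum_exp x).tendsto_sum_nat

theorem isEquivalent_natCast_add_const (c : ℝ) :
    (fun n : ℕ => (n : ℝ) + c) ~[atTop] fun n => (n : ℝ) :=
  (IsEquivalent.refl.add_isLittleO (isLittleO_const_id_atTop c)).comp_tendsto
    tendsto_natCast_atTop_atTop

theorem isEquivalent_sum_range_succ_pow_div_factorial_mul (x : ℝ) :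
    (fun d : ℕ => ∑ k ∈ range (d + 1), x ^ k / k ! * ((d : ℝ) + 1 - k))
      ~[atTop] fun d => d * exp x := by
  have hS := tendsto_sum_range_pow_div_factorial x
  have hmain : (fun d : ℕ => ((d : ℝ) + 1) * ∑ k ∈ range (d + 1), x ^ k / k !)
      ~[atTop] fun d => d * exp x :=
    (isEquivalent_natCast_add_const 1).mul
      ((isEquivalent_const_iff_tendsto (exp_ne_zero x)).mpr (hS.comp (tendsto_add_atTop_nat 1)))
  have hgrows : Tendsto (fun d : ℕ => ‖(d : ℝ) * exp x‖) atTop atTop :=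
    tendsto_norm_atTop_atTop.comp
      (tendsto_natCast_atTop_atTop.atTop_mul_const (exp_pos x))
  have hsmall : (fun d : ℕ => x * ∑ k ∈ range d, x ^ k / k !) =o[atTop] fun d => d * exp x :=
    (hS.const_mul x).isBigO_one ℝ |>.trans_isLittleO ((isLittleO_one_left_iff ℝ).mpr hgrows)
  exact (hmain.sub_isLittleO hsmall).congr_left
    (.of_forall fun d => (sum_range_succ_pow_div_factorial_mul x d).symm)

theorem sqrt_two_pi_mul_rpow_div_exp_pow_eq (d : ℕ) :
    √(2 * π) * ((d : ℝ) ^ ((2 * (d : ℝ) + 1) / 2) * ((d : ℝ) + 3)) / exp 1 ^ (d + 2)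
      = √(2 * d * π) * (d / exp 1) ^ d * (((d : ℝ) + 3) * exp (-2)) := by
  have hpow : (d : ℝ) ^ ((2 * (d : ℝ) + 1) / 2) = (d : ℝ) ^ d * √d := by
    rw [show (2 * (d : ℝ) + 1) / 2 = d + 1 / 2 by ring, rpow_add' d.cast_nonneg (by positivity),
      rpow_natCast, sqrt_eq_rpow]
  have hexp2 : exp 2 = exp 1 ^ 2 := by rw [exp_one_pow]; norm_num
  rw [hpow, mul_right_comm 2, sqrt_mul' _ d.cast_nonneg, div_pow, pow_add, exp_neg, hexp2]
  field_simp

/-- **Asymptotics of the degree of the hyperdeterminant of format `2^{×d}`.**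
Let `N d := d! · a_d`, where `a_d` is the `d`-th coefficient of the formal power series
`exp(-2x)·(1-x)^{-2} ∈ ℚ[[x]]`. Then `N d` is asymptotically equivalent to
`√(2π) · d^{(2d+1)/2} · (d+3) / e^{d+2}` as `d → ∞`. -/
theorem binary_hyperdet_degree_asymptotics
    (F : PowerSeries ℚ)
    (hF : F = PowerSeries.rescale (-2 : ℚ) (PowerSeries.exp ℚ) * ((1 - PowerSeries.X) ^ 2)⁻¹)
    (N : ℕ → ℚ)
    (hN : ∀ d : ℕ, N d = (d.factorial : ℚ) * PowerSeries.coeff d F) :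
    Tendsto (fun d : ℕ =>
      (N d : ℝ) /
        (Real.sqrt (2 * Real.pi) * ((d : ℝ) ^ ((2 * (d : ℝ) + 1) / 2) * ((d : ℝ) + 3)) /
          Real.exp 1 ^ (d + 2)))
      atTop (nhds 1) := by
  set stirling : ℕ → ℝ := fun d => √(2 * d * π) * (d / exp 1) ^ d
  have hN_equiv : (fun d => (N d : ℝ)) ~[atTop] fun d => stirling d * (d * exp (-2)) := by
    refine (Stirling.factorial_isEquivalent_stirling.mul
      (isEquivalent_sum_range_succ_pow_div_factorial_mul (-2))).congr_left (.of_forall fun d => ?_)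
    simp only [hN, hF, coeff_rescale_exp_mul_inv_one_sub_X_sq]
    push_cast
    rfl
  have hD_equiv : (fun d : ℕ => √(2 * π) * ((d : ℝ) ^ ((2 * (d : ℝ) + 1) / 2) * ((d : ℝ) + 3)) /
      exp 1 ^ (d + 2)) ~[atTop] fun d => stirling d * (d * exp (-2)) := by
    simp only [sqrt_two_pi_mul_rpow_div_exp_pow_eq, stirling]
    exact IsEquivalent.refl.mul ((isEquivalent_natCast_add_const 3).mul IsEquivalent.refl)
  have hD_ne : ∀ᶠ d : ℕ in atTop,
      √(2 * π) * ((d : ℝ) ^ ((2 * (d : ℝ) + 1) / 2) * ((d : ℝ) + 3)) / exp 1 ^ (d + 2) ≠ 0 := by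
    filter_upwards [eventually_ne_atTop 0] with d hd
    rw [sqrt_two_pi_mul_rpow_div_exp_pow_eq]
    positivity
  exact (isEquivalent_iff_tendsto_one hD_ne).mp (hN_equiv.trans hD_equiv.symm)
end

section
/- For d ∈ ℕ define E_d := d! · ∑_{i=0}^d ((-2)^i / i!) · (2^{d+1-i} - 1) (this is the generic ED degree of the Segre product of d projective lines). Then as d → ∞, the ratio of E_d to √(2π) · d^{(2d+1)/2} · (2^{d+1}·e - 1) / e^{d+2} tends to 1. -/
/-!
Writing `s_d(x) = ∑_{i ≤ d} x^i / i!`, the binomial-like sum splits as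
`E_d = d! · (2^{d+1} s_d(-1) - s_d(-2))`. Since `s_d(x) → e^x` while `2^{d+1} → ∞`, the bracket is
asymptotic to `2^{d+1} e⁻¹ - e⁻² = (2^{d+1} e - 1) / e²`, and Stirling's formula
`d! ~ √(2πd) (d/e)^d` accounts for the remaining factor.
-/

open Filter Finset Asymptotics
open scoped Topology Nat

theorem Real.tendsto_sum_range_succ_pow_div_factorial (x : ℝ) :
    Tendsto (fun n : ℕ => ∑ i ∈ range (n + 1), x ^ i / (i ! : ℝ)) atTop (𝓝 (Real.exp x)) := by
  rw [Real.exp_eq_exp_ℝ]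
  exact (tendsto_add_atTop_iff_nat 1).mpr (NormedSpace.expSeries_div_hasSum_exp x).tendsto_sum_nat

theorem Asymptotics.isEquivalent_mul_sub_of_tendsto {α 𝕜 : Type*} [NormedField 𝕜] {l : Filter α}
    {a u v : α → 𝕜} {x y : 𝕜} (ha : Tendsto (fun n => ‖a n‖) l atTop) (hu : Tendsto u l (𝓝 x))
    (hv : Tendsto v l (𝓝 y)) (hx : x ≠ 0) :
    (fun n => a n * u n - v n) ~[l] fun n => a n * x - y := by
  have hax : Tendsto (fun n => ‖a n * x‖) l atTop := by
    simpa only [norm_mul] using ha.atTop_mul_const (norm_pos_iff.mpr hx)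
  have hbounded : ∀ {w : α → 𝕜} {z : 𝕜}, Tendsto w l (𝓝 z) → w =o[l] fun n => a n * x :=
    fun hw => (hw.isBigO_one 𝕜).trans_isLittleO (isLittleO_one_left_iff 𝕜 |>.mpr hax)
  have hau : (fun n => a n * u n) ~[l] fun n => a n * x :=
    IsEquivalent.refl.mul ((isEquivalent_const_iff_tendsto hx).mpr hu)
  exact (hau.sub_isLittleO (hbounded hv)).trans
    (IsEquivalent.refl.sub_isLittleO (hbounded tendsto_const_nhds)).symm

theorem sum_range_neg_pow_div_factorial_mul_pow_sub_one {K : Type*} [Field K] (c : K) (d : ℕ) :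
    ∑ i ∈ range (d + 1), ((-c) ^ i / (i ! : K)) * (c ^ (d + 1 - i) - 1)
      = c ^ (d + 1) * ∑ i ∈ range (d + 1), (-1 : K) ^ i / (i ! : K)
        - ∑ i ∈ range (d + 1), (-c) ^ i / (i ! : K) := by
  rw [mul_sum, ← sum_sub_distrib]
  refine sum_congr rfl fun i hi => ?_
  have hsplit : c ^ (d + 1) = c ^ i * c ^ (d + 1 - i) := by
    rw [← pow_add, Nat.add_sub_cancel' (mem_range.mp hi).le]
  rw [hsplit, neg_eq_neg_one_mul c, mul_pow]
  ring

theorem sqrt_two_pi_mul_rpow_div_exp_pow (n : ℕ) (c : ℝ) :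
    √(2 * Real.pi) * ((n : ℝ) ^ ((2 * (n : ℝ) + 1) / 2) * c) / Real.exp 1 ^ (n + 2)
      = √(2 * n * Real.pi) * (n / Real.exp 1) ^ n * (c / Real.exp 1 ^ 2) := by
  have hrpow : (n : ℝ) ^ ((2 * (n : ℝ) + 1) / 2) = n ^ n * √n := by
    rw [show (2 * (n : ℝ) + 1) / 2 = n + 1 / 2 by ring,
      Real.rpow_add' n.cast_nonneg (by positivity), Real.rpow_natCast, Real.sqrt_eq_rpow]
  rw [hrpow, show 2 * (n : ℝ) * Real.pi = 2 * Real.pi * n by ring,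
    Real.sqrt_mul (by positivity : (0 : ℝ) ≤ 2 * Real.pi), div_pow, pow_add]
  field_simp

/-- **Asymptotics of the generic ED degree of `(ℙ^1)^{×d}`.**
Let `E_d := d! · ∑_{i=0}^d ((-2)^i / i!) · (2^{d+1-i} - 1)`. Then `E_d` is asymptotically
equivalent to `√(2π) · d^{(2d+1)/2} · (2^{d+1}·e - 1) / e^{d+2}` as `d → ∞`. -/
theorem generic_EDdegree_asymptotics
    (E : ℕ → ℝ)
    (hE : ∀ d : ℕ, E d = (d.factorial : ℝ) *
      ∑ i ∈ Finset.range (d + 1),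
        ((-2 : ℝ) ^ i / (i.factorial : ℝ)) * ((2 : ℝ) ^ (d + 1 - i) - 1)) :
    Tendsto (fun d : ℕ =>
      E d /
        (Real.sqrt (2 * Real.pi) * ((d : ℝ) ^ ((2 * (d : ℝ) + 1) / 2) *
          ((2 : ℝ) ^ (d + 1) * Real.exp 1 - 1)) / Real.exp 1 ^ (d + 2)))
      atTop (nhds 1) := by
  have hpow : Tendsto (fun d : ℕ => ‖(2 : ℝ) ^ (d + 1)‖) atTop atTop := by
    simpa only [norm_pow, Real.norm_two, Function.comp_def] using
      (tendsto_pow_atTop_atTop_of_one_lt one_lt_two).comp (tendsto_add_atTop_nat 1)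
  have hsum := isEquivalent_mul_sub_of_tendsto hpow
    (Real.tendsto_sum_range_succ_pow_div_factorial (-1))
    (Real.tendsto_sum_range_succ_pow_div_factorial (-2)) (Real.exp_pos _).ne'
  have hcoeff (d : ℕ) : ((2 : ℝ) ^ (d + 1) * Real.exp 1 - 1) / Real.exp 1 ^ 2
      = 2 ^ (d + 1) * Real.exp (-1) - Real.exp (-2) := by
    rw [Real.exp_neg, Real.exp_neg,
      show Real.exp 2 = Real.exp 1 ^ 2 by rw [Real.exp_one_pow]; norm_num]
    field_simp
  simp_rw [sqrt_two_pi_mul_rpow_div_exp_pow, hcoeff, hE,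
    sum_range_neg_pow_div_factorial_mul_pow_sub_one]
  refine (isEquivalent_iff_tendsto_one ?_).mp (Stirling.factorial_isEquivalent_stirling.mul hsum)
  filter_upwards [eventually_ge_atTop 1] with d hd
  have hd_pos : (0 : ℝ) < d := by exact_mod_cast hd
  have hcoeff_pos : Real.exp (-2) < 2 ^ (d + 1) * Real.exp (-1) :=
    calc Real.exp (-2) < Real.exp (-1) := Real.exp_lt_exp.mpr (by norm_num)
      _ ≤ 2 ^ (d + 1) * Real.exp (-1) :=
        le_mul_of_one_le_left (Real.exp_pos _).le (one_le_pow₀ one_le_two)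
  exact (mul_pos (by positivity) (sub_pos.mpr hcoeff_pos)).ne'
end

section
/- For integers n, m, i, d with 0 ≤ i ≤ m ≤ n, define α_i(n,m,d) := ∑_{s=i}^{n+m} (-1)^s (m+n+1-s) · [∑_{k=0}^{s-i} C(n+2,k)·(-d)^{s-i-k}] · C(m+n-s, n-s+i), where C(a,b) denotes the binomial coefficient with the convention C(a,b) = 0 whenever b < 0 or b > a. Then for all integers d and all n ≥ m: α_i(n+1, m, d) = (d-1) · α_i(n, m, d). -/
open Finset

/-- The binomial coefficient `C(a,b)` for integers, with the convention that
`C(a,b) = 0` whenever `b < 0` or `b > a`. -/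
def intChoose (a b : ℤ) : ℤ :=
  if 0 ≤ b ∧ b ≤ a then (a.toNat.choose b.toNat : ℤ) else 0

/-- The coefficient `α_i(n,m,d)` expressing the zeroth polar class of `X × Y_n` in terms of
the degrees of the Chern–Mather classes of `X`. -/
def alphaCoeff (n m i : ℕ) (d : ℤ) : ℤ :=
  ∑ s ∈ Finset.Icc i (n + m),
    (-1 : ℤ) ^ s * ((m : ℤ) + n + 1 - s) *
      (∑ k ∈ Finset.range (s - i + 1), intChoose ((n : ℤ) + 2) k * (-d) ^ (s - i - k)) *
      intChoose ((m : ℤ) + n - s) ((n : ℤ) - s + i)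

/-!
Put `M = m - i` and `s = i + j`. The inner sum is the coefficient of `t^j` in
`(1 + t)^(n+2) / (1 + d t)`, and absorbing the sign `(-1)^j` turns it into the coefficient of
`(1 - t)^(n+2) / (1 - d t)`. The outer weight `(M+n+1-j) C(M+n-j, M)` vanishes for `j > n` and
equals `(M + 1) C(M+1+(n-j), M+1)`, the coefficient of `t^(n-j)` in `(M + 1) (1 - t)^(-(M+2))`.
So `(-1)^i α_i(n,m,d) / (M + 1)` is the coefficient of `t^n` in `(1 - t)^(n-M) / (1 - d t)`,
namely `d^M (d - 1)^(n-M)`, and this closed form gives the recursion in `n` at once.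
-/

open PowerSeries

lemma intChoose_natCast (a b : ℕ) : intChoose a b = a.choose b := by
  unfold intChoose
  split_ifs with h
  · simp
  · rw [Nat.choose_eq_zero_of_lt (by omega), Nat.cast_zero]

lemma intChoose_of_neg (a : ℤ) {b : ℤ} (hb : b < 0) : intChoose a b = 0 := by
  simp [intChoose, not_le.2 hb]

namespace PowerSeries

variable {R : Type*} [CommRing R]

theorem coeff_one_sub_X_pow (N k : ℕ) :
    coeff k ((1 - X : R⟦X⟧) ^ N) = (-1) ^ k * N.choose k := by
  have h : (1 - X : R⟦X⟧) ^ N = rescale (-1) ((1 + X) ^ N) := by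
    simp [rescale_X, sub_eq_add_neg]
  rw [h, coeff_rescale, ← binomialSeries_nat (R := ℤ), binomialSeries_coeff,
    Ring.choose_natCast]
  simp

theorem coeff_one_sub_X_pow_mul_mk_pow (a : R) (N e : ℕ) :
    coeff (N + e) ((1 - X) ^ N * PowerSeries.mk fun l => a ^ l) = a ^ e * (a - 1) ^ N := by
  induction N generalizing e with
  | zero => simp
  | succ N ih =>
    rw [pow_succ', mul_assoc, sub_mul, one_mul, map_sub, show N + 1 + e = N + e + 1 by omega,
      coeff_succ_X_mul, show N + e + 1 = N + (e + 1) by omega, ih, ih]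
    ring

theorem coeff_mul_invOneSubPow_succ (F : R⟦X⟧) (M n : ℕ) :
    coeff n (F * (invOneSubPow R (M + 1) : R⟦X⟧))
      = ∑ j ∈ range (n + 1), coeff j F * ((M + (n - j)).choose M : R) := by
  rw [invOneSubPow_val_succ_eq_mk_add_choose, coeff_mul,
    Nat.sum_antidiagonal_eq_sum_range_succ_mk]
  simp only [coeff_mk]

end PowerSeries

lemma neg_one_pow_mul_sum_intChoose (n j : ℕ) (d : ℤ) :
    (-1) ^ j * ∑ k ∈ range (j + 1), intChoose ((n : ℤ) + 2) k * (-d) ^ (j - k)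
      = coeff j ((1 - X : ℤ⟦X⟧) ^ (n + 2) * PowerSeries.mk fun l => d ^ l) := by
  rw [coeff_mul, Nat.sum_antidiagonal_eq_sum_range_succ_mk, mul_sum]
  refine sum_congr rfl fun k hk => ?_
  obtain ⟨l, rfl⟩ := Nat.exists_eq_add_of_le (Nat.lt_succ_iff.1 (mem_range.1 hk))
  have hchoose := intChoose_natCast (n + 2) k
  push_cast at hchoose
  have hsquare : (-1 : ℤ) ^ l * (-1) ^ l = 1 := by rw [← mul_pow]; norm_num
  rw [hchoose, coeff_one_sub_X_pow, coeff_mk, Nat.add_sub_cancel_left, pow_add, neg_pow d]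
  linear_combination ((-1) ^ k * ((n + 2).choose k : ℤ) * d ^ l) * hsquare

lemma alphaCoeff_eq_sum_range (n M i : ℕ) (d : ℤ) :
    alphaCoeff n (i + M) i d = (-1) ^ i * (M + 1) * ∑ j ∈ range (n + 1),
      coeff j ((1 - X : ℤ⟦X⟧) ^ (n + 2) * PowerSeries.mk fun l => d ^ l) *
        ((M + 1 + (n - j)).choose (M + 1) : ℤ) := by
  rw [alphaCoeff, ← Ico_add_one_right_eq_Icc, sum_Ico_eq_sum_range,
    show n + (i + M) + 1 - i = (n + 1) + M by omega, sum_range_add, mul_sum]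
  rw [sum_eq_zero (s := range M) fun t _ => by
    rw [intChoose_of_neg _ (by push_cast; omega), mul_zero], add_zero]
  refine sum_congr rfl fun j hj => ?_
  have hjn : j ≤ n := Nat.lt_succ_iff.1 (mem_range.1 hj)
  have hfactor : ((i + M : ℕ) : ℤ) + n + 1 - (i + j : ℕ) = (M + (n - j) + 1 : ℕ) := by omega
  have hchoose : intChoose ((i + M : ℕ) + n - (i + j : ℕ)) (n - (i + j : ℕ) + i)
      = (M + (n - j)).choose M := by
    rw [show ((i + M : ℕ) : ℤ) + n - (i + j : ℕ) = (M + (n - j) : ℕ) by omega,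
      show (n : ℤ) - (i + j : ℕ) + i = (n - j : ℕ) by omega, intChoose_natCast,
      Nat.choose_symm_add]
  have hpascal : ((M + (n - j) + 1 : ℕ) : ℤ) * (M + (n - j)).choose M
      = (M + 1 + (n - j)).choose (M + 1) * (M + 1) := by
    rw [Nat.add_right_comm M 1]
    exact_mod_cast Nat.add_one_mul_choose_eq (M + (n - j)) M
  rw [Nat.add_sub_cancel_left, hfactor, hchoose, ← neg_one_pow_mul_sum_intChoose, pow_add]
  generalize ∑ k ∈ range (j + 1), intChoose ((n : ℤ) + 2) k * (-d) ^ (j - k) = S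
  linear_combination ((-1) ^ i * (-1) ^ j * S) * hpascal

theorem alphaCoeff_eq (n M i : ℕ) (d : ℤ) (hM : M ≤ n) :
    alphaCoeff n (i + M) i d = (-1) ^ i * (M + 1) * d ^ M * (d - 1) ^ (n - M) := by
  have hcancel : (1 - X : ℤ⟦X⟧) ^ (n + 2) * (PowerSeries.mk fun l => d ^ l) *
      (invOneSubPow ℤ (M + 1 + 1) : ℤ⟦X⟧)
        = (1 - X) ^ (n - M) * PowerSeries.mk fun l => d ^ l := by
    rw [mul_right_comm, show n + 2 = n - M + (M + 1 + 1) by omega,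
      one_sub_pow_add_mul_invOneSubPow_val_eq_one_sub_pow]
  have hcoeff := coeff_one_sub_X_pow_mul_mk_pow d (n - M) M
  rw [Nat.sub_add_cancel hM] at hcoeff
  rw [alphaCoeff_eq_sum_range, ← coeff_mul_invOneSubPow_succ, hcancel, hcoeff]
  ring

/-- For all `0 ≤ i ≤ m ≤ n` and all integers `d`:
`α_i(n+1, m, d) = (d-1) · α_i(n, m, d)`. -/
theorem alphaCoeff_succ (n m i : ℕ) (d : ℤ) (hi : i ≤ m) (hmn : m ≤ n) :
    alphaCoeff (n + 1) m i d = (d - 1) * alphaCoeff n m i d := by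
  obtain ⟨M, rfl⟩ := Nat.exists_eq_add_of_le hi
  rw [alphaCoeff_eq n M i d (by omega), alphaCoeff_eq (n + 1) M i d (by omega),
    show n + 1 - M = n - M + 1 by omega]
  ring
end

section
/- For all integers n ≥ m ≥ 0, setting f(n) := ∑_{r=0}^{n} (-1)^r · C(n+1, r+1) · C(m+n+1-r, m), the recurrence (1+n-m)·f(n) + (n+3)·f(n+1) = 2·(m+n+2)! / ((n+1)!·m!) holds. -/
/-!
For `m ≤ n` the sum has the closed form `f n = C(m+n+2, m)`. Indeed, after the substitution
`r ↦ n - r`, `-f n + C(m+n+2, m)` is the `(n+1)`-st forward difference of `x ↦ C(x, m)` at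
`m + 1`, which vanishes because `C(·, m)` is a polynomial of degree `m < n + 1`.
The recurrence then reduces to `(n+3) C(m+n+3, m) = (m+n+3) C(m+n+2, m)`.
-/

open Finset fwdDiff

theorem fwdDiff_iter_choose_eq_zero_of_lt {K N : ℕ} (h : K < N) :
    (Δ_[1])^[N] (fun x ↦ x.choose K : ℕ → ℤ) = 0 := by
  obtain ⟨j, rfl⟩ := Nat.exists_eq_add_of_lt h
  have h_iter_K : (Δ_[1])^[K] (fun x ↦ x.choose K : ℕ → ℤ) = fun _ ↦ 1 := by
    simpa using fwdDiff_iter_choose 0 K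
  rw [show K + j + 1 = j + 1 + K by ring, Function.iterate_add_apply, h_iter_K,
    Function.iterate_succ_apply, fwdDiff_const]
  exact Function.iterate_fixed (fwdDiff_const 1 0) j

theorem Int.alternating_sum_range_choose_mul_choose_add_of_lt {K N : ℕ} (h : K < N) (a : ℕ) :
    ∑ k ∈ Finset.range (N + 1), (-1 : ℤ) ^ (N - k) * N.choose k * (a + k).choose K = 0 := by
  have := congr_fun (fwdDiff_iter_choose_eq_zero_of_lt h) a
  rw [fwdDiff_iter_eq_sum_shift] at this
  simpa using this

theorem alternating_sum_range_choose_succ_mul_choose_eq_choose {m n : ℕ} (h : m ≤ n) :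
    ∑ r ∈ range (n + 1),
        (-1 : ℚ) ^ r * ((n + 1).choose (r + 1) : ℚ) * ((m + n + 1 - r).choose m : ℚ)
      = (m + n + 2).choose m := by
  have h_vanish := congrArg (Int.cast : ℤ → ℚ)
    (Int.alternating_sum_range_choose_mul_choose_add_of_lt (N := n + 1) (Nat.lt_succ_of_le h)
      (m + 1))
  push_cast at h_vanish
  rw [sum_range_succ, Nat.sub_self, Nat.choose_self, show m + 1 + (n + 1) = m + n + 2 by ring]
    at h_vanish
  simp only [pow_zero, Nat.cast_one, one_mul] at h_vanish
  have h_term : ∀ j ∈ range (n + 1),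
      (-1 : ℚ) ^ (n + 1 - 1 - j) * ((n + 1).choose (n + 1 - 1 - j + 1) : ℚ)
          * ((m + n + 1 - (n + 1 - 1 - j)).choose m : ℚ)
        = -((-1) ^ (n + 1 - j) * ((n + 1).choose j : ℚ) * ((m + 1 + j).choose m : ℚ)) := by
    intro j hj
    have hj : j ≤ n := Nat.lt_succ_iff.mp (mem_range.mp hj)
    rw [show n + 1 - j = n + 1 - 1 - j + 1 by omega,
      show m + n + 1 - (n + 1 - 1 - j) = m + 1 + j by omega,
      Nat.choose_symm_of_eq_add (show n + 1 = n + 1 - 1 - j + 1 + j by omega), pow_succ]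
    ring
  rw [← sum_range_reflect, sum_congr rfl h_term, sum_neg_distrib]
  linarith

theorem one_add_sub_mul_choose_add_mul_choose_eq_factorial_div (m n : ℕ) :
    (1 + (n : ℚ) - m) * (m + n + 2).choose m + ((n : ℚ) + 3) * (m + n + 3).choose m
      = 2 * ((m + n + 2).factorial : ℚ) / ((n + 1).factorial * m.factorial) := by
  have h_succ : ((n : ℚ) + 3) * (m + n + 3).choose m = (m + n + 3) * (m + n + 2).choose m := by
    have := Nat.choose_mul_succ_eq (m + n + 2) m
    rw [show m + n + 2 + 1 - m = n + 3 by omega] at this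
    qify at this
    linarith
  have h_fact : ((m + n + 2).factorial : ℚ)
      = (m + n + 2).choose m * m.factorial * (n + 2).factorial := by
    have := Nat.choose_mul_factorial_mul_factorial (Nat.le_add_right m (n + 2))
    rw [Nat.add_sub_cancel_left] at this
    exact_mod_cast this.symm
  rw [h_succ, h_fact, Nat.factorial_succ (n + 1)]
  field_simp
  push_cast
  ring

/-- **Zeilberger recurrence for `f(n) = ∑_{r=0}^{n} (-1)^r C(n+1,r+1) C(m+n+1-r, m)`.**
For all `n ≥ m ≥ 0`: `(1+n-m)·f(n) + (n+3)·f(n+1) = 2·(m+n+2)! / ((n+1)!·m!)`. -/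
theorem zeilberger_recurrence_f (m : ℕ) (f : ℕ → ℚ)
    (hf : ∀ N : ℕ, f N = ∑ r ∈ Finset.range (N + 1),
      (-1 : ℚ) ^ r * ((N + 1).choose (r + 1) : ℚ) * ((m + N + 1 - r).choose m : ℚ))
    (n : ℕ) (hmn : m ≤ n) :
    (1 + (n : ℚ) - (m : ℚ)) * f n + ((n : ℚ) + 3) * f (n + 1)
      = 2 * ((m + n + 2).factorial : ℚ) / (((n + 1).factorial : ℚ) * (m.factorial : ℚ)) := by
  rw [hf, hf, alternating_sum_range_choose_succ_mul_choose_eq_choose hmn,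
    alternating_sum_range_choose_succ_mul_choose_eq_choose (Nat.le_succ_of_le hmn),
    show m + (n + 1) + 2 = m + n + 3 by ring]
  exact one_add_sub_mul_choose_add_mul_choose_eq_factorial_div m n
end

section
/- For all integers n ≥ 0 and m ≥ 0: ∑_{r=m}^{n+m} (-1)^r (m+n+1-r) · C(n+2, r+1-m) = (-1)^m · (n+2). -/
open Finset

/- Substituting `r = m + i` pulls out the sign `(-1)^m`, and the absorption identity
`(n + 1 - i) C(n+2, i+1) = (n + 2) C(n+1, i+1)` pulls out the factor `n + 2`. What is left is
`∑_{i=0}^{n} (-1)^i C(n+1, i+1) = 1`, the vanishing alternating sum of the row `n + 1` with its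
first term removed. -/

theorem Int.alternating_sum_range_choose_succ (n : ℕ) :
    ∑ i ∈ Finset.range (n + 1), (-1 : ℤ) ^ i * ((n + 1).choose (i + 1) : ℤ) = 1 := by
  have h := Int.alternating_sum_range_choose_of_ne (n.add_one_ne_zero)
  rw [sum_range_succ'] at h
  simp only [pow_succ, mul_neg_one, neg_mul, sum_neg_distrib, Nat.choose_zero_right, Nat.cast_one,
    pow_zero, mul_one] at h
  linarith

theorem Int.sub_mul_choose_add_two (n i : ℕ) (hi : i ≤ n + 1) :
    ((n : ℤ) + 1 - i) * ((n + 2).choose (i + 1) : ℤ)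
      = ((n : ℤ) + 2) * ((n + 1).choose (i + 1) : ℤ) := by
  have h := Nat.choose_mul_succ_eq (n + 1) (i + 1)
  rw [show n + 1 + 1 - (i + 1) = n + 1 - i by omega] at h
  have h' := congrArg (Nat.cast : ℕ → ℤ) h
  push_cast [Nat.cast_sub hi] at h'
  linear_combination -h'

/-- **The case `i = m` of the master binomial identity.** For all `n, m ≥ 0`:
`∑_{r=m}^{n+m} (-1)^r (m+n+1-r) · C(n+2, r+1-m) = (-1)^m · (n+2)`. -/
theorem binomial_identity_i_m (n m : ℕ) :
    ∑ r ∈ Finset.Icc m (n + m),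
      (-1 : ℤ) ^ r * ((m : ℤ) + n + 1 - r) * ((n + 2).choose (r + 1 - m) : ℤ)
      = (-1 : ℤ) ^ m * ((n : ℤ) + 2) := by
  rw [← Ico_add_one_right_eq_Icc, sum_Ico_eq_sum_range, show n + m + 1 - m = n + 1 by omega]
  calc _ = ∑ i ∈ range (n + 1),
        (-1 : ℤ) ^ m * ((n : ℤ) + 2) * ((-1 : ℤ) ^ i * ((n + 1).choose (i + 1) : ℤ)) := by
        refine sum_congr rfl fun i hi_mem => ?_
        have hi : i ≤ n + 1 := by rw [mem_range] at hi_mem; omega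
        rw [show m + i + 1 - m = i + 1 by omega, pow_add]
        push_cast
        linear_combination (-1 : ℤ) ^ m * (-1 : ℤ) ^ i * Int.sub_mul_choose_add_two n i hi
    _ = (-1 : ℤ) ^ m * ((n : ℤ) + 2) := by
        rw [← mul_sum, Int.alternating_sum_range_choose_succ, mul_one]
end

section
/- For all integers j ≥ 1 and n ≥ j, the following identity of rational numbers holds: ∑_{s=0}^{n} (-1)^s · (n+1-s+j)! / ((n+1-s)! · (s+1)! · (n-s)!) = (n+2+j)! / ((n+1)! · (n+2)!). -/
/-!
Each summand equals `j! / (n+1)!` times `(-1)^s C(n+1, s+1) C(n+1-s+j, j)`. With `t = s + 1` the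
sum becomes `C(n+2+j, j)` minus the full alternating sum
`∑_{t ≤ n+1} (-1)^t C(n+1, t) C(n+2+j-t, j)`, which is the coefficient of `X^j` in
`((1 + X) - 1)^(n+1) (1 + X)^(j+1) = X^(n+1) (1 + X)^(j+1)`, hence zero because `j < n + 1`.
-/

open Finset Polynomial

theorem sum_range_alternating_choose_C_mul_one_add_X_pow {R : Type*} [CommRing R] {m c : ℕ}
    (h : m ≤ c) :
    ∑ t ∈ range (m + 1), C ((-1 : R) ^ t * m.choose t) * (1 + X) ^ (c - t)
      = X ^ m * (1 + X) ^ (c - m) := by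
  have hX : (X : R[X]) = (1 + X) + (-1) := by ring
  rw [hX, add_pow, sum_mul, ← sum_range_reflect]
  refine sum_congr rfl fun t ht => ?_
  have ht : t ≤ m := Nat.lt_succ_iff.mp (mem_range.mp ht)
  rw [show m + 1 - 1 - t = m - t by omega, Nat.choose_symm ht,
    show c - (m - t) = t + (c - m) by omega, ← hX]
  simp only [map_mul, map_pow, map_neg, map_one, C_eq_natCast, pow_add]
  ring

theorem sum_range_alternating_choose_mul_choose_sub_eq_zero {R : Type*} [CommRing R]
    {m c k : ℕ} (hmc : m ≤ c) (hk : k < m) :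
    ∑ t ∈ range (m + 1), (-1 : R) ^ t * m.choose t * (c - t).choose k = 0 := by
  have h := congrArg (coeff · k) (sum_range_alternating_choose_C_mul_one_add_X_pow (R := R) hmc)
  simp only [finsetSum_coeff, coeff_C_mul, coeff_one_add_X_pow] at h
  rwa [mul_comm, coeff_mul_X_pow', if_neg (by omega)] at h

theorem sum_range_alternating_choose_succ_mul_choose {R : Type*} [CommRing R] {j n : ℕ}
    (hn : j ≤ n) :
    ∑ s ∈ range (n + 1), (-1 : R) ^ s * (n + 1).choose (s + 1) * (n + 1 - s + j).choose j
      = (n + 2 + j).choose j := by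
  have h := sum_range_alternating_choose_mul_choose_sub_eq_zero (R := R)
    (c := n + 2 + j) (k := j) (m := n + 1) (by omega) (by omega)
  rw [sum_range_succ', pow_zero, Nat.choose_zero_right, Nat.sub_zero, Nat.cast_one, one_mul,
    one_mul, add_eq_zero_iff_neg_eq, ← sum_neg_distrib] at h
  rw [← h]
  refine sum_congr rfl fun s hs => ?_
  rw [show n + 2 + j - (s + 1) = n + 1 - s + j by have := mem_range.mp hs; omega, pow_succ]
  ring

theorem factorial_div_eq_mul_choose_mul_choose {j n s : ℕ} (hs : s ≤ n) :
    ((n + 1 - s + j).factorial : ℚ) /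
        ((n + 1 - s).factorial * (s + 1).factorial * (n - s).factorial)
      = j.factorial / (n + 1).factorial * ((n + 1).choose (s + 1) * (n + 1 - s + j).choose j) := by
  rw [Nat.cast_choose ℚ (show s + 1 ≤ n + 1 by omega), Nat.cast_choose ℚ (Nat.le_add_left j _),
    show n + 1 - (s + 1) = n - s by omega, Nat.add_sub_cancel]
  field_simp

theorem binomial_identity_intermediate_general (j n : ℕ) (hn : j ≤ n) :
    ∑ s ∈ Finset.range (n + 1),
      (-1 : ℚ) ^ s * ((n + 1 - s + j).factorial : ℚ) /
        (((n + 1 - s).factorial : ℚ) * ((s + 1).factorial : ℚ) * ((n - s).factorial : ℚ))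
      = ((n + 2 + j).factorial : ℚ) / (((n + 1).factorial : ℚ) * ((n + 2).factorial : ℚ)) := by
  calc _ = j.factorial / (n + 1).factorial * ∑ s ∈ range (n + 1),
          (-1 : ℚ) ^ s * (n + 1).choose (s + 1) * (n + 1 - s + j).choose j := by
        rw [mul_sum]
        refine sum_congr rfl fun s hs => ?_
        rw [mul_div_assoc,
          factorial_div_eq_mul_choose_mul_choose (Nat.lt_succ_iff.mp (mem_range.mp hs))]
        ring
    _ = _ := by
        rw [sum_range_alternating_choose_succ_mul_choose hn,
          Nat.cast_choose ℚ (Nat.le_add_left j _), Nat.add_sub_cancel]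
        field_simp

/-- **The intermediate cases of the master binomial identity.** For all `j ≥ 1` and `n ≥ j`:
`∑_{s=0}^{n} (-1)^s (n+1-s+j)! / ((n+1-s)!·(s+1)!·(n-s)!) = (n+2+j)! / ((n+1)!·(n+2)!)`. -/
theorem binomial_identity_intermediate (j n : ℕ) (hj : 1 ≤ j) (hn : j ≤ n) :
    ∑ s ∈ Finset.range (n + 1),
      (-1 : ℚ) ^ s * ((n + 1 - s + j).factorial : ℚ) /
        (((n + 1 - s).factorial : ℚ) * ((s + 1).factorial : ℚ) * ((n - s).factorial : ℚ))
      = ((n + 2 + j).factorial : ℚ) / (((n + 1).factorial : ℚ) * ((n + 2).factorial : ℚ)) :=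
  binomial_identity_intermediate_general j n hn
end

section
/- For all integers j ≥ 1 and n ≥ j, setting g(n,j) := ∑_{s=0}^{n} (-1)^s · (n+1-s+j)! / ((n+1-s)! · (s+1)! · (n-s)!), the recurrence (n+1-j)·g(n,j) + (n² + 5n + 6)·g(n+1,j) = 2·(n+2+j)! / ((n+1)!)² holds. -/
/-!
Creative telescoping. With `F(N, s)` the summand of `g(N, j)`, Zeilberger's algorithm yields the
certificate `G(s) = (s + 1)(2n + 4 - s) F(n + 1, s)`, for which
`(n + 1 - j) F(n, s) + (n² + 5n + 6) F(n + 1, s) = G(s) - G(s + 1)` when `s ≤ n`. Summing over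
`s ≤ n` leaves `G(0)`, which is the right-hand side, minus `G(n + 1)`, which is exactly the
missing last term `s = n + 1` of `(n² + 5n + 6) g(n + 1, j)`.
-/

open Finset Nat

def gSummand (j N s : ℕ) : ℚ :=
  (-1) ^ s * ((N + 1 - s + j)! : ℚ) / (((N + 1 - s)! : ℚ) * ((s + 1)! : ℚ) * ((N - s)! : ℚ))

def gCertificate (j n s : ℕ) : ℚ :=
  ((s : ℚ) + 1) * (2 * n + 4 - s) * gSummand j (n + 1) s

lemma gSummand_add (j s a : ℕ) :
    gSummand j (s + a) s =
      (-1) ^ s * ((a + 1 + j)! : ℚ) / (((a + 1)! : ℚ) * ((s + 1)! : ℚ) * (a ! : ℚ)) := by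
  have h₁ : s + a + 1 - s = a + 1 := by omega
  rw [gSummand, h₁, Nat.add_sub_cancel_left]

lemma gSummand_combination_eq_gCertificate_sub (j : ℕ) {n s : ℕ} (hs : s ≤ n) :
    ((n : ℚ) + 1 - j) * gSummand j n s + ((n : ℚ) ^ 2 + 5 * n + 6) * gSummand j (n + 1) s
      = gCertificate j n s - gCertificate j n (s + 1) := by
  obtain ⟨a, rfl⟩ := Nat.exists_eq_add_of_le hs
  have h₁ : s + a + 1 = s + (a + 1) := by ring
  have h₂ : s + a + 1 = (s + 1) + a := by ring
  have h₃ : a + 1 + 1 + j = (a + 1 + j) + 1 := by ring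
  simp only [gCertificate]
  rw [gSummand_add, h₁, gSummand_add, ← h₁, h₂, gSummand_add, h₃,
    factorial_succ (a + 1 + j), factorial_succ (a + 1), factorial_succ a,
    factorial_succ (s + 1), factorial_succ s]
  push_cast
  field_simp
  ring

lemma gCertificate_zero (j n : ℕ) :
    gCertificate j n 0 = 2 * ((n + 2 + j)! : ℚ) / ((n + 1)! : ℚ) ^ 2 := by
  have h : n + 1 + 1 + j = n + 2 + j := by ring
  simp only [gCertificate, gSummand, Nat.sub_zero, h, factorial_succ (n + 1)]
  push_cast
  field_simp
  ring

lemma gCertificate_succ_self (j n : ℕ) :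
    gCertificate j n (n + 1) = ((n : ℚ) ^ 2 + 5 * n + 6) * gSummand j (n + 1) (n + 1) := by
  rw [gCertificate]
  push_cast
  ring

theorem zeilberger_recurrence_g_general (j : ℕ) (g : ℕ → ℚ)
    (hg : ∀ N : ℕ, g N = ∑ s ∈ Finset.range (N + 1),
      (-1 : ℚ) ^ s * ((N + 1 - s + j).factorial : ℚ) /
        (((N + 1 - s).factorial : ℚ) * ((s + 1).factorial : ℚ) * ((N - s).factorial : ℚ)))
    (n : ℕ) :
    ((n : ℚ) + 1 - (j : ℚ)) * g n + ((n : ℚ) ^ 2 + 5 * (n : ℚ) + 6) * g (n + 1)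
      = 2 * ((n + 2 + j).factorial : ℚ) / ((n + 1).factorial : ℚ) ^ 2 := by
  have hg' : ∀ N, g N = ∑ s ∈ range (N + 1), gSummand j N s := hg
  rw [hg', hg', mul_sum, mul_sum, sum_range_succ _ (n + 1), ← gCertificate_succ_self,
    ← add_assoc, ← sum_add_distrib,
    sum_congr rfl fun s hs =>
      gSummand_combination_eq_gCertificate_sub j (Nat.lt_succ_iff.mp (mem_range.mp hs)),
    sum_range_sub', gCertificate_zero, sub_add_cancel]

/-- **Zeilberger recurrence for
`g(n,j) = ∑_{s=0}^{n} (-1)^s (n+1-s+j)! / ((n+1-s)!·(s+1)!·(n-s)!)`.**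
For all `j ≥ 1` and `n ≥ j`:
`(n+1-j)·g(n,j) + (n²+5n+6)·g(n+1,j) = 2·(n+2+j)! / ((n+1)!)²`. -/
theorem zeilberger_recurrence_g (j : ℕ) (g : ℕ → ℚ)
    (hg : ∀ N : ℕ, g N = ∑ s ∈ Finset.range (N + 1),
      (-1 : ℚ) ^ s * ((N + 1 - s + j).factorial : ℚ) /
        (((N + 1 - s).factorial : ℚ) * ((s + 1).factorial : ℚ) * ((N - s).factorial : ℚ)))
    (n : ℕ) (hj : 1 ≤ j) (hn : j ≤ n) :
    ((n : ℚ) + 1 - (j : ℚ)) * g n + ((n : ℚ) ^ 2 + 5 * (n : ℚ) + 6) * g (n + 1)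
      = 2 * ((n + 2 + j).factorial : ℚ) / ((n + 1).factorial : ℚ) ^ 2 :=
  zeilberger_recurrence_g_general j g hg n
end
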